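/- Let K be a compact Hausdorff space and E a complex Banach space. The smallest closed (not necessarily unital) subalgebra of C(K × B_{E*}, ℂ) that contains T(C(K,E)) and is closed under complex conjugation is C⁰(K × B_{E*}) = { f ∈ C(K × B_{E*}, ℂ) : f(t, 0) = 0 for every t ∈ K }, where 0 denotes the zero functional in B_{E*}. -/

import Mathlib

/-!
Let `B` be the closure of the non-unital star algebra generated by the functions
`(t, φ) ↦ φ (f t)`; it is the intersection in the statement. Since `ψ(t) · φ (f t) = φ ((ψ • f) t)`,
`B` is stable under multiplication by functions of `t` alone. Those functions together with `B`
separate the points of `K × B_{E*}`, so by Stone–Weierstrass the star algebra of multipliers of `B`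
is everything, i.e. `B` is a closed ideal. A closed ideal of `C(X, 𝕜)` consists of all functions
vanishing on its common zero set, and the common zero set of `B` is `K × {0}`.
-/

noncomputable section

/-- The closed unit ball of the dual of `E`, equipped with the weak* topology. -/
abbrev DualBall (𝕜 E : Type*) [RCLike 𝕜] [NormedAddCommGroup E] [NormedSpace 𝕜 E] :=
  {φ : WeakDual 𝕜 E // ‖WeakDual.toStrongDual φ‖ ≤ 1}

namespace NonUnitalStarAlgebra

variable {R A : Type*} [CommSemiring R] [StarRing R] [NonUnitalCommSemiring A] [StarRing A]
  [Module R A] [IsScalarTower R A A] [SMulCommClass R A A] [StarModule R A]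

theorem mul_mem_adjoin_of_forall_mul_mem {s M : Set A} (hM : ∀ m ∈ M, star m ∈ M)
    (hMs : ∀ m ∈ M, ∀ x ∈ s, m * x ∈ adjoin R s) {m a : A} (hm : m ∈ M)
    (ha : a ∈ adjoin R s) : m * a ∈ adjoin R s := by
  induction ha using adjoin_induction generalizing m with
  | mem x hx => exact hMs m hm x hx
  | add x y _ _ hx hy => rw [mul_add]; exact add_mem (hx hm) (hy hm)
  | zero => rw [mul_zero]; exact zero_mem _
  | mul x y _ hy' hx _ => rw [← mul_assoc]; exact mul_mem (hx hm) hy'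
  | smul r x _ hx => rw [mul_smul_comm]; exact SMulMemClass.smul_mem r (hx hm)
  | star x _ hx =>
    rw [← star_star m, ← star_mul, mul_comm]
    exact star_mem (hx (hM m hm))

end NonUnitalStarAlgebra

namespace NonUnitalStarSubalgebra

section

variable {R A : Type*} [CommSemiring R] [TopologicalSpace A] [Star A] [NonUnitalSemiring A]
  [Module R A] [ContinuousStar A] [ContinuousConstSMul R A] [IsSemitopologicalSemiring A]

theorem mul_mem_topologicalClosure {s : NonUnitalStarSubalgebra R A} {m a : A}
    (hm : ∀ x ∈ s, m * x ∈ s) (ha : a ∈ s.topologicalClosure) : m * a ∈ s.topologicalClosure :=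
  map_mem_closure (continuous_const_mul m) ha hm

end

section

variable {R A : Type*} [CommSemiring R] [StarRing R] [NonUnitalSemiring A] [StarRing A]
  [Module R A] [IsScalarTower R A A] [SMulCommClass R A A] [StarModule R A]
  [TopologicalSpace A] [ContinuousStar A] [ContinuousConstSMul R A] [IsSemitopologicalSemiring A]

theorem sInter_isClosed_eq_topologicalClosure_adjoin {s : Set A} (hs : s.Nonempty) :
    ⋂₀ {B : Set A | IsClosed B ∧ s ⊆ B ∧
        (∀ b₁ ∈ B, ∀ b₂ ∈ B, b₁ + b₂ ∈ B) ∧ (∀ (c : R), ∀ b ∈ B, c • b ∈ B) ∧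
        (∀ b₁ ∈ B, ∀ b₂ ∈ B, b₁ * b₂ ∈ B) ∧ (∀ b ∈ B, star b ∈ B)} =
      (NonUnitalStarAlgebra.adjoin R s).topologicalClosure := by
  refine subset_antisymm (Set.sInter_subset_of_mem ?_) (Set.subset_sInter ?_)
  · exact ⟨isClosed_topologicalClosure _,
      (NonUnitalStarAlgebra.subset_adjoin R s).trans (le_topologicalClosure _),
      fun _ h₁ _ h₂ ↦ add_mem h₁ h₂, fun c _ h ↦ SMulMemClass.smul_mem c h,
      fun _ h₁ _ h₂ ↦ mul_mem h₁ h₂, fun _ h ↦ star_mem h⟩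
  · rintro B ⟨hB, hsB, hadd, hsmul, hmul, hstar⟩
    obtain ⟨x, hx⟩ := hs
    let B' : NonUnitalStarSubalgebra R A :=
      { carrier := B
        add_mem' := fun h₁ h₂ ↦ hadd _ h₁ _ h₂
        zero_mem' := zero_smul R x ▸ hsmul 0 x (hsB hx)
        mul_mem' := fun h₁ h₂ ↦ hmul _ h₁ _ h₂
        smul_mem' := hsmul
        star_mem' := fun h ↦ hstar _ h }
    exact topologicalClosure_minimal (s := NonUnitalStarAlgebra.adjoin R s) (t := B')
      (NonUnitalStarAlgebra.adjoin_le hsB) hB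

end

section

variable {R A : Type*} [CommSemiring R] [StarRing R] [CommSemiring A] [StarRing A] [Algebra R A]
  [StarModule R A]

def idealizer (B : NonUnitalStarSubalgebra R A) : StarSubalgebra R A where
  carrier := {h | ∀ b ∈ B, h * b ∈ B}
  mul_mem' {h₁ h₂} hh₁ hh₂ b hb := mul_assoc h₁ h₂ b ▸ hh₁ _ (hh₂ b hb)
  add_mem' {h₁ h₂} hh₁ hh₂ b hb := (add_mul h₁ h₂ b).symm ▸ add_mem (hh₁ b hb) (hh₂ b hb)
  algebraMap_mem' r b hb := Algebra.smul_def r b ▸ SMulMemClass.smul_mem r hb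
  star_mem' {h} hh b hb := by
    rw [← star_star b, ← star_mul, mul_comm]
    exact star_mem (hh _ (star_mem hb))

theorem mem_idealizer {B : NonUnitalStarSubalgebra R A} {h : A} :
    h ∈ B.idealizer ↔ ∀ b ∈ B, h * b ∈ B :=
  Iff.rfl

theorem isClosed_idealizer [TopologicalSpace A] [ContinuousMul A] {B : NonUnitalStarSubalgebra R A}
    (hB : IsClosed (B : Set A)) : IsClosed (B.idealizer : Set A) := by
  have : (B.idealizer : Set A) = ⋂ b ∈ B, (· * b) ⁻¹' B := by
    ext h; simp [mem_idealizer]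
  rw [this]
  exact isClosed_biInter fun b _ ↦ hB.preimage (continuous_mul_const b)

end

end NonUnitalStarSubalgebra

namespace ContinuousMap

variable {X 𝕜 : Type*} [TopologicalSpace X] [RCLike 𝕜]

variable (𝕜) in
def vanishingOn (Z : Set X) : NonUnitalStarSubalgebra 𝕜 C(X, 𝕜) where
  carrier := {f | ∀ x ∈ Z, f x = 0}
  add_mem' hf hg x hx := by simp [hf x hx, hg x hx]
  zero_mem' _ _ := rfl
  mul_mem' hf _ x hx := by simp [hf x hx]
  smul_mem' c _ hf x hx := by simp [hf x hx]
  star_mem' hf x hx := by simp [hf x hx]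

theorem mem_vanishingOn {Z : Set X} {f : C(X, 𝕜)} : f ∈ vanishingOn 𝕜 Z ↔ ∀ x ∈ Z, f x = 0 :=
  Iff.rfl

theorem isClosed_vanishingOn (Z : Set X) : IsClosed (vanishingOn 𝕜 Z : Set C(X, 𝕜)) := by
  have : (vanishingOn 𝕜 Z : Set C(X, 𝕜)) = ⋂ x ∈ Z, {f | f x = 0} := by
    ext f; simp [mem_vanishingOn]
  rw [this]
  exact isClosed_biInter fun x _ ↦ isClosed_eq (continuous_eval_const x) continuous_const

variable [CompactSpace X]

theorem mul_mem_of_separatesPoints {B : NonUnitalStarSubalgebra 𝕜 C(X, 𝕜)}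
    (hB : IsClosed (B : Set C(X, 𝕜))) {M : Set C(X, 𝕜)} (hM : ∀ m ∈ M, ∀ b ∈ B, m * b ∈ B)
    (hsep : ∀ x y, x ≠ y → ∃ g ∈ M ∪ B, g x ≠ g y) (h : C(X, 𝕜)) {b : C(X, 𝕜)} (hb : b ∈ B) :
    h * b ∈ B := by
  have hsub : M ∪ B ⊆ B.idealizer := Set.union_subset hM fun b₁ hb₁ _ hb₂ ↦ mul_mem hb₁ hb₂
  have hD : B.idealizer.SeparatesPoints := fun x y hxy ↦ by
    obtain ⟨g, hg, hgxy⟩ := hsep x y hxy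
    exact ⟨g, ⟨g, hsub hg, rfl⟩, hgxy⟩
  have htop := starSubalgebra_topologicalClosure_eq_top_of_separatesPoints _ hD
  rw [← SetLike.coe_set_eq, StarSubalgebra.topologicalClosure_coe,
    (B.isClosed_idealizer hB).closure_eq] at htop
  exact (htop ▸ Set.mem_univ h : h ∈ (B.idealizer : Set C(X, 𝕜))) b hb

variable [T2Space X]

theorem eq_vanishingOn_of_forall_mul_mem {B : NonUnitalStarSubalgebra 𝕜 C(X, 𝕜)}
    (hB : IsClosed (B : Set C(X, 𝕜))) (hmul : ∀ h, ∀ b ∈ B, h * b ∈ B) {Z : Set X}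
    (hBZ : B ≤ vanishingOn 𝕜 Z) (hZ : ∀ x ∉ Z, ∃ b ∈ B, b x ≠ 0) : B = vanishingOn 𝕜 Z := by
  let I : Ideal C(X, 𝕜) :=
    { carrier := B
      add_mem' := add_mem
      zero_mem' := zero_mem B
      smul_mem' := fun h _ hb ↦ hmul h _ hb }
  refine le_antisymm hBZ fun f hf ↦ ?_
  have hfI : f ∈ idealOfSet 𝕜 (setOfIdeal I) := mem_idealOfSet.2 fun x hx ↦
    hf x (not_not.1 fun hxZ ↦ hx (mem_setOfIdeal.2 (hZ x hxZ)))
  rwa [idealOfSet_ofIdeal_isClosed (I := I) hB] at hfI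

end ContinuousMap

namespace DualBall

variable {𝕜 E : Type*} [RCLike 𝕜] [NormedAddCommGroup E] [NormedSpace 𝕜 E]

instance : Zero (DualBall 𝕜 E) :=
  ⟨⟨0, by simp⟩⟩

instance : CompactSpace (DualBall 𝕜 E) :=
  (isCompact_iff_compactSpace (s := {φ : WeakDual 𝕜 E | ‖WeakDual.toStrongDual φ‖ ≤ 1})).mp <| by
    simpa [Metric.closedBall] using WeakDual.isCompact_closedBall (𝕜 := 𝕜) (E := E) 0 1

theorem continuous_eval : Continuous fun p : DualBall 𝕜 E × E ↦ p.1.1 p.2 :=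
  continuous_prod_of_continuous_lipschitzWith' _ 1
    (fun φ ↦ (WeakDual.toStrongDual φ.1).lipschitz.weaken (by exact_mod_cast φ.2))
    fun e ↦ (WeakDual.eval_continuous e).comp continuous_subtype_val

variable {K : Type*} [TopologicalSpace K]

variable (𝕜) in
def pairing (f : C(K, E)) : C(K × DualBall 𝕜 E, 𝕜) :=
  ⟨fun p ↦ p.2.1 (f p.1),
    continuous_eval.comp (continuous_snd.prodMk (f.continuous.comp continuous_fst))⟩

@[simp]
theorem pairing_apply (f : C(K, E)) (p : K × DualBall 𝕜 E) : pairing 𝕜 f p = p.2.1 (f p.1) :=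
  rfl

theorem comp_fst_mul_pairing (ψ : C(K, 𝕜)) (f : C(K, E)) :
    ψ.comp ContinuousMap.fst * pairing 𝕜 f = pairing 𝕜 (ψ • f) := by
  ext p; simp

open NonUnitalStarAlgebra NonUnitalStarSubalgebra ContinuousMap

variable [CompactSpace K]

theorem comp_fst_mul_mem_topologicalClosure_adjoin (ψ : C(K, 𝕜)) {b : C(K × DualBall 𝕜 E, 𝕜)}
    (hb : b ∈ (adjoin 𝕜 (Set.range (pairing 𝕜 (K := K) (E := E)))).topologicalClosure) :
    ψ.comp fst * b ∈ (adjoin 𝕜 (Set.range (pairing 𝕜 (K := K) (E := E)))).topologicalClosure := by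
  refine mul_mem_topologicalClosure (fun a ha ↦ ?_) hb
  refine mul_mem_adjoin_of_forall_mul_mem (M := Set.range fun ψ : C(K, 𝕜) ↦ ψ.comp fst)
    ?_ ?_ ⟨ψ, rfl⟩ ha
  · rintro _ ⟨ψ, rfl⟩
    exact ⟨star ψ, rfl⟩
  · rintro _ ⟨ψ, rfl⟩ _ ⟨f, rfl⟩
    rw [comp_fst_mul_pairing]
    exact subset_adjoin 𝕜 _ ⟨ψ • f, rfl⟩

theorem topologicalClosure_adjoin_range_pairing [T2Space K] :
    (adjoin 𝕜 (Set.range (pairing 𝕜 (K := K) (E := E)))).topologicalClosure =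
      vanishingOn 𝕜 {p : K × DualBall 𝕜 E | p.2 = 0} := by
  set B := (adjoin 𝕜 (Set.range (pairing 𝕜 (K := K) (E := E)))).topologicalClosure
  have hpairing (f : C(K, E)) : pairing 𝕜 f ∈ B :=
    le_topologicalClosure _ (subset_adjoin 𝕜 _ ⟨f, rfl⟩)
  have hsep : ∀ x y, x ≠ y → ∃ g ∈ (Set.range fun ψ : C(K, 𝕜) ↦ ψ.comp fst) ∪
      (B : Set C(K × DualBall 𝕜 E, 𝕜)), g x ≠ g y := by
    rintro ⟨t, φ⟩ ⟨s, φ'⟩ hxy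
    by_cases hts : t = s
    · obtain ⟨e, he⟩ : ∃ e, φ.1 e ≠ φ'.1 e :=
        DFunLike.ne_iff.1 fun h ↦ hxy (hts ▸ Prod.ext rfl (Subtype.ext h))
      exact ⟨pairing 𝕜 (const K e), Or.inr (hpairing _), by simpa [hts] using he⟩
    · obtain ⟨u, hu₀, hu₁, -⟩ := exists_continuous_zero_one_of_isClosed
        isClosed_singleton isClosed_singleton (Set.disjoint_singleton.2 hts)
      refine ⟨(⟨fun t ↦ (u t : 𝕜), by fun_prop⟩ : C(K, 𝕜)).comp fst, Or.inl ⟨_, rfl⟩, ?_⟩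
      simp [hu₀ rfl, hu₁ rfl]
  have hBZ : B ≤ vanishingOn 𝕜 {p : K × DualBall 𝕜 E | p.2 = 0} := by
    refine topologicalClosure_minimal _ (adjoin_le ?_) (isClosed_vanishingOn _)
    rintro _ ⟨f, rfl⟩ ⟨t, φ⟩ (rfl : φ = 0)
    rfl
  have hZ (x : K × DualBall 𝕜 E) (hx : x.2 ≠ 0) : ∃ b ∈ B, b x ≠ 0 := by
    obtain ⟨e, he⟩ : ∃ e, x.2.1 e ≠ 0 := DFunLike.ne_iff.1 fun h ↦ hx (Subtype.ext h)
    exact ⟨pairing 𝕜 (const K e), hpairing _, he⟩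
  exact eq_vanishingOn_of_forall_mul_mem (isClosed_topologicalClosure _)
    (mul_mem_of_separatesPoints (isClosed_topologicalClosure _)
      (by rintro _ ⟨ψ, rfl⟩ b hb; exact comp_fst_mul_mem_topologicalClosure_adjoin ψ hb) hsep)
    hBZ hZ

end DualBall

/-- The smallest closed (not necessarily unital) subalgebra of
`C(K × B_{E*}, ℂ)` containing `T(C(K,E))` and closed under complex conjugation is
`C⁰(K × B_{E*}) = { f : f(t,0) = 0 for all t ∈ K }`. -/
theorem closed_star_subalgebra_generated_by_T_eq
    (K : Type*) [TopologicalSpace K] [CompactSpace K] [T2Space K]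
    (E : Type*) [NormedAddCommGroup E] [NormedSpace ℂ E] :
    ⋂₀ {A : Set C(K × DualBall ℂ E, ℂ) |
        IsClosed A ∧
        (∀ (f : C(K, E)) (g : C(K × DualBall ℂ E, ℂ)),
          (∀ p : K × DualBall ℂ E, g p = p.2.1 (f p.1)) → g ∈ A) ∧
        (∀ g₁ ∈ A, ∀ g₂ ∈ A, g₁ + g₂ ∈ A) ∧
        (∀ (c : ℂ), ∀ g ∈ A, c • g ∈ A) ∧
        (∀ g₁ ∈ A, ∀ g₂ ∈ A, g₁ * g₂ ∈ A) ∧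
        (∀ g ∈ A, star g ∈ A)} =
    {g : C(K × DualBall ℂ E, ℂ) | ∀ t : K, g (t, ⟨0, by simp⟩) = 0} := by
  have hrange (A : Set C(K × DualBall ℂ E, ℂ)) :
      (∀ (f : C(K, E)) (g : C(K × DualBall ℂ E, ℂ)),
        (∀ p : K × DualBall ℂ E, g p = p.2.1 (f p.1)) → g ∈ A) ↔
      Set.range (DualBall.pairing ℂ) ⊆ A := by
    refine ⟨fun h ↦ ?_, fun h f g hg ↦ ?_⟩
    · rintro _ ⟨f, rfl⟩
      exact h f _ fun _ ↦ rfl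
    · exact (ContinuousMap.ext hg : g = DualBall.pairing ℂ f) ▸ h ⟨f, rfl⟩
  simp_rw [hrange]
  rw [NonUnitalStarSubalgebra.sInter_isClosed_eq_topologicalClosure_adjoin (Set.range_nonempty _),
    DualBall.topologicalClosure_adjoin_range_pairing]
  ext g
  refine ⟨fun h t ↦ h (t, 0) rfl, ?_⟩
  rintro h ⟨t, φ⟩ (rfl : φ = 0)
  exact h t
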